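/- Let G be a finite simple graph, let T be a clique in G, and let z be a vertex of T with deg(z) = |T| − 1. Then z is either a critical vertex or an uncritical vertex of G, and consequently Z(G∖z) ∈ {Z(G), Z(G) − 1}. -/

import Mathlib

/-!  Common definitions: zero forcing (standard, loop, positive semidefinite),
zero-nonzero patterns, triangles, and related graph parameters. -/

variable {V : Type*}

/-- Standard zero forcing rule: with filled set `S`, the filled vertex `v` can force
its unique unfilled neighbor `u`. -/
def StdForce (G : SimpleGraph V) (S : Set V) (v u : V) : Prop :=
  v ∈ S ∧ u ∉ S ∧ G.Adj v u ∧ ∀ w, G.Adj v w → w ∉ S → w = u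

/-- Adjacency in the looping of `G` with loops at the vertices in `L`
(a vertex counts as its own neighbor iff it has a loop). -/
def LoopAdj (G : SimpleGraph V) (L : Set V) (v w : V) : Prop :=
  G.Adj v w ∨ (v = w ∧ v ∈ L)

/-- Loop zero forcing rule (the forcing vertex need not be filled): `v` can force `u`
if `u` is the only unfilled neighbor of `v` in the looping. -/
def LoopForce (G : SimpleGraph V) (L : Set V) (S : Set V) (v u : V) : Prop :=
  u ∉ S ∧ LoopAdj G L v u ∧ ∀ w, LoopAdj G L v w → w ∉ S → w = u

/-- Positive semidefinite zero forcing rule: the filled vertex `v` can force the unfilled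
vertex `u` if `u` is the only neighbor of `v` in the connected component of `u` of the
subgraph induced by the unfilled vertices. -/
def PsdForce (G : SimpleGraph V) (S : Set V) (v u : V) : Prop :=
  v ∈ S ∧ u ∉ S ∧ G.Adj v u ∧
    ∀ w, G.Adj v w → w ∉ S →
      Relation.ReflTransGen (fun a b => G.Adj a b ∧ a ∉ S ∧ b ∉ S) u w → w = u

/-- The vertices performing a force in a forcing sequence. -/
def sourcesOf (seq : List (V × V)) : Set V := {v | ∃ p ∈ seq, p.1 = v}

/-- The vertices that get forced in a forcing sequence. -/
def targetsOf (seq : List (V × V)) : Set V := {u | ∃ p ∈ seq, p.2 = u}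

/-- The filled set after performing all forces of `seq` starting from `F`. -/
def filledAfter (F : Set V) (seq : List (V × V)) : Set V := F ∪ targetsOf seq

/-- `ValidSeq rule seq F`: starting with `F` as the filled set, the sequence of forces
`seq` is permitted (each force in turn is allowed by `rule`, and each vertex forces
at most once). -/
def ValidSeq (rule : Set V → V → V → Prop) : List (V × V) → Set V → Prop
  | [], _ => True
  | (v, u) :: rest, F => rule F v u ∧ (∀ p ∈ rest, p.1 ≠ v) ∧ ValidSeq rule rest (insert u F)

/-- `F` is a zero forcing set w.r.t. the forcing rule `rule`. -/
def IsZFSet (rule : Set V → V → V → Prop) (F : Set V) : Prop :=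
  ∃ seq : List (V × V), ValidSeq rule seq F ∧ filledAfter F seq = Set.univ

/-- `F` is a zero forcing set (w.r.t. `rule`) from which `R` can be the set of vertices
that force: some (automatically complete) forcing sequence from `F` fills every vertex
and the set of vertices performing a force is exactly `R`. -/
def ForcesWith (rule : Set V → V → V → Prop) (F R : Set V) : Prop :=
  ∃ seq : List (V × V), ValidSeq rule seq F ∧ filledAfter F seq = Set.univ ∧
    sourcesOf seq = R

/-- The zero forcing number w.r.t. a forcing rule. -/
noncomputable def Znum (rule : Set V → V → V → Prop) : ℕ :=
  sInf {n | ∃ F : Set V, IsZFSet rule F ∧ F.ncard = n}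

/-- The (standard) zero forcing number `Z(G)`. -/
noncomputable def Z (G : SimpleGraph V) : ℕ := Znum (StdForce G)

/-- The zero forcing number of the looping of `G` with loops at `L`. -/
noncomputable def Zloop (G : SimpleGraph V) (L : Set V) : ℕ := Znum (LoopForce G L)

/-- The positive semidefinite zero forcing number `Z₊(G)`. -/
noncomputable def Zplus (G : SimpleGraph V) : ℕ := Znum (PsdForce G)

/-- The enhanced zero forcing number `Ẑ(G)`: the maximum over all loopings of `G` of the
zero forcing number of the looping. -/
noncomputable def Zhat (G : SimpleGraph V) : ℕ := sSup {n | ∃ L : Set V, Zloop G L = n}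

/-- `F` is a direct zero forcing set for `G`: some forcing sequence from `F` fills every
vertex and every vertex that performs a force belongs to `F`. -/
def IsDirectZFSet (G : SimpleGraph V) (F : Set V) : Prop :=
  ∃ seq : List (V × V), ValidSeq (StdForce G) seq F ∧ filledAfter F seq = Set.univ ∧
    sourcesOf seq ⊆ F

/-- The direct zero forcing number `Z_d(G)`. -/
noncomputable def Zd (G : SimpleGraph V) : ℕ :=
  sInf {n | ∃ F : Set V, IsDirectZFSet G F ∧ F.ncard = n}

/-- A zero-nonzero pattern `Y` (entry `Y i j` means the `(i,j)` entry is `*`)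
has a `k × k` submatrix that is a triangle. -/
def HasTriOfSize {ρ γ : Type*} (Y : ρ → γ → Prop) (k : ℕ) : Prop :=
  ∃ (r : Fin k → ρ) (c : Fin k → γ), Function.Injective r ∧ Function.Injective c ∧
    (∀ i, Y (r i) (c i)) ∧ ∀ i j : Fin k, i < j → ¬ Y (r i) (c j)

/-- The triangle number `tri(Y)` of a zero-nonzero pattern. -/
noncomputable def tri {ρ γ : Type*} (Y : ρ → γ → Prop) : ℕ := sSup {k | HasTriOfSize Y k}

/-- Membership in `S_znz(G)`: off the diagonal, the pattern matches the adjacency of `G`. -/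
def InSznz (G : SimpleGraph V) (A : V → V → Prop) : Prop :=
  ∀ i j : V, i ≠ j → (A i j ↔ G.Adj i j)

/-- The zero-nonzero pattern of the looping of `G` with loops at `L`. -/
def loopPattern (G : SimpleGraph V) (L : Set V) : V → V → Prop :=
  fun i j => (i = j ∧ i ∈ L) ∨ (i ≠ j ∧ G.Adj i j)

/-- The submatrix of the pattern `Y` with rows `R` and columns `C` is a triangle:
there are enumerations of `R` and `C` realizing a lower-triangular pattern with `*`
diagonal (in particular `|R| = |C|`). -/
def SubIsTriangle {ρ γ : Type*} (Y : ρ → γ → Prop) (R : Finset ρ) (C : Finset γ) : Prop :=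
  ∃ (k : ℕ) (r : Fin k → ρ) (c : Fin k → γ),
    Function.Injective r ∧ Function.Injective c ∧
    (∀ x : ρ, x ∈ R ↔ ∃ i, r i = x) ∧ (∀ y : γ, y ∈ C ↔ ∃ i, c i = y) ∧
    (∀ i, Y (r i) (c i)) ∧ ∀ i j : Fin k, i < j → ¬ Y (r i) (c j)

/-- `(R, C)` is a persistent triangle of `G`. -/
def PersistentTriangle (G : SimpleGraph V) (R C : Finset V) : Prop :=
  ∀ A : V → V → Prop, InSznz G A → SubIsTriangle A R C

/-- `F` is a direct zero forcing set for `G` from which `R` can be the set of vertices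
that force. -/
def DirectForcesWith (G : SimpleGraph V) (F R : Set V) : Prop :=
  ∃ seq : List (V × V), ValidSeq (StdForce G) seq F ∧ filledAfter F seq = Set.univ ∧
    sourcesOf seq = R ∧ R ⊆ F

/-- `(range r, range c)` is a partition of `G` according to the `m × n` pattern `Y`,
with labelings given by `r` and `c`. -/
def PartitionAccording (G : SimpleGraph V) {m n : ℕ} (Y : Fin m → Fin n → Prop)
    (r : Fin m → V) (c : Fin n → V) : Prop :=
  Function.Injective r ∧ Function.Injective c ∧ (∀ i j, r i ≠ c j) ∧
    (∀ v : V, (∃ i, r i = v) ∨ (∃ j, c j = v)) ∧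
    ∀ i j, G.Adj (r i) (c j) ↔ Y i j

/-- `F` is a zero forcing set for `G` that forces from `V1` to `V2`. -/
def ForcesFromTo (G : SimpleGraph V) (F V1 V2 : Set V) : Prop :=
  V1 ⊆ F ∧ ∃ seq : List (V × V), ValidSeq (StdForce G) seq F ∧
    filledAfter F seq = Set.univ ∧ sourcesOf seq ⊆ V1 ∧ targetsOf seq ⊆ V2

/-- `(V1, V2)` is a partition of the vertex set of `G` into two cliques. -/
def IsCliquePartition (G : SimpleGraph V) (V1 V2 : Set V) : Prop :=
  Disjoint V1 V2 ∧ V1 ∪ V2 = Set.univ ∧ G.IsClique V1 ∧ G.IsClique V2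

/-- `G` is cobipartite. -/
def Cobipartite (G : SimpleGraph V) : Prop := ∃ V1 V2 : Set V, IsCliquePartition G V1 V2

/-- `G` is the cobipartite graph associated with the pattern `Y`, via labelings `r`, `c`. -/
def CobipAssociated (G : SimpleGraph V) {m n : ℕ} (Y : Fin m → Fin n → Prop)
    (r : Fin m → V) (c : Fin n → V) : Prop :=
  PartitionAccording G Y r c ∧ G.IsClique (Set.range r) ∧ G.IsClique (Set.range c)

/-- `z` is a critical vertex: some optimal forcing sequence neither lets `z` force
nor forces `z`. -/
def Critical (G : SimpleGraph V) (z : V) : Prop :=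
  ∃ (F : Set V) (seq : List (V × V)), F.ncard = Z G ∧ ValidSeq (StdForce G) seq F ∧
    filledAfter F seq = Set.univ ∧ z ∉ sourcesOf seq ∧ z ∉ targetsOf seq

/-- `z` is an uncritical vertex: in every optimal forcing sequence, exactly one of the
following holds: `z` performs a force, or `z` gets forced. -/
def Uncritical (G : SimpleGraph V) (z : V) : Prop :=
  ∀ (F : Set V) (seq : List (V × V)), F.ncard = Z G → ValidSeq (StdForce G) seq F →
    filledAfter F seq = Set.univ → (z ∈ sourcesOf seq ↔ z ∉ targetsOf seq)

/-- The maximum nullity `M(G)` over the field `𝔽`. -/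
noncomputable def Mnum (𝔽 : Type*) [Field 𝔽] [Fintype V] [DecidableEq V]
    (G : SimpleGraph V) : ℕ :=
  sSup {k | ∃ A : Matrix V V 𝔽, A.IsSymm ∧ (∀ i j : V, i ≠ j → (A i j ≠ 0 ↔ G.Adj i j)) ∧
    k = Fintype.card V - A.rank}

/-- The minimum rank `mr_𝔽(Y)` of a zero-nonzero pattern over the field `𝔽`. -/
noncomputable def mr (𝔽 : Type*) [Field 𝔽] {m n : ℕ} (Y : Fin m → Fin n → Prop) : ℕ :=
  sInf {k | ∃ A : Matrix (Fin m) (Fin n) 𝔽, (∀ i j, A i j ≠ 0 ↔ Y i j) ∧ A.rank = k}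

/-- `G` is a `k`-tree: there is a construction ordering of the vertices in which the
first `k+1` vertices form a clique and every later vertex is adjacent among the earlier
vertices to exactly a `k`-clique. -/
def IsKTree (k : ℕ) [Fintype V] (G : SimpleGraph V) : Prop :=
  k + 1 ≤ Fintype.card V ∧ ∃ ord : V ≃ Fin (Fintype.card V),
    (∀ u v : V, (ord u : ℕ) < k + 1 → (ord v : ℕ) < k + 1 → u ≠ v → G.Adj u v) ∧
    ∀ v : V, k + 1 ≤ (ord v : ℕ) →
      G.IsClique {u : V | (ord u : ℕ) < (ord v : ℕ) ∧ G.Adj u v} ∧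
      {u : V | (ord u : ℕ) < (ord v : ℕ) ∧ G.Adj u v}.ncard = k

/-!
Because the neighbourhood of `z` is a clique, `z` cannot be forced by some `w` and later
force some `x`: `x` and `w` are adjacent, so `x` would be a second unfilled neighbour of `w`
when `w` forces. Hence in every forcing sequence `z` forces, is forced, or neither, which gives
the dichotomy. Deleting `z` from an optimal forcing sequence, and filling from the start the
vertex that `z` forced (if any), gives a zero forcing set of `G ∖ z` with at most `Z(G)`
vertices; conversely a zero forcing set of `G ∖ z` together with `z` forces `G`.
-/

section ForcingSequences

variable {rule : Set V → V → V → Prop}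

@[simp] lemma sourcesOf_nil : sourcesOf ([] : List (V × V)) = ∅ := by
  simp [sourcesOf]

@[simp] lemma targetsOf_nil : targetsOf ([] : List (V × V)) = ∅ := by
  simp [targetsOf]

@[simp] lemma sourcesOf_cons (p : V × V) (l : List (V × V)) :
    sourcesOf (p :: l) = insert p.1 (sourcesOf l) := by
  ext x; simp [sourcesOf, eq_comm]

@[simp] lemma targetsOf_cons (p : V × V) (l : List (V × V)) :
    targetsOf (p :: l) = insert p.2 (targetsOf l) := by
  ext x; simp [targetsOf, eq_comm]

lemma targetsOf_map {W : Type*} (f g : V → W) (l : List (V × V)) :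
    targetsOf (l.map (Prod.map f g)) = g '' targetsOf l := by
  ext x
  simp only [targetsOf, List.mem_map, Prod.exists, Prod.map, Set.mem_image, Set.mem_ofPred_eq]
  aesop

lemma filledAfter_cons (S : Set V) (p : V × V) (l : List (V × V)) :
    filledAfter S (p :: l) = filledAfter (insert p.2 S) l := by
  simp [filledAfter, Set.insert_union]

lemma ValidSeq.nodup_map_fst : ∀ {seq : List (V × V)} {S : Set V},
    ValidSeq rule seq S → (seq.map Prod.fst).Nodup
  | [], _, _ => List.nodup_nil
  | (v, _) :: _, _, ⟨_, hd, hrest⟩ =>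
    List.nodup_cons.2 ⟨by simpa using fun u hu => hd (v, u) hu rfl, hrest.nodup_map_fst⟩

lemma ValidSeq.exists_superset_of_mem : ∀ {seq : List (V × V)} {S : Set V},
    ValidSeq rule seq S → ∀ p ∈ seq, ∃ S', S ⊆ S' ∧ rule S' p.1 p.2
  | [], _, _, _, hp => absurd hp List.not_mem_nil
  | (v, u) :: _, S, ⟨hf, _, hrest⟩, p, hp => by
    rcases List.mem_cons.1 hp with rfl | hp
    · exact ⟨S, subset_rfl, hf⟩
    · obtain ⟨S', hS', hr⟩ := hrest.exists_superset_of_mem p hp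
      exact ⟨S', (Set.subset_insert _ _).trans hS', hr⟩

lemma ValidSeq.snd_notMem {G : SimpleGraph V} {seq : List (V × V)} {S : Set V}
    (h : ValidSeq (StdForce G) seq S) {p : V × V} (hp : p ∈ seq) : p.2 ∉ S := by
  obtain ⟨S', hS', hr⟩ := h.exists_superset_of_mem p hp
  exact fun hpS => hr.2.1 (hS' hpS)

lemma Znum_le_ncard {F : Set V} (h : IsZFSet rule F) : Znum rule ≤ F.ncard :=
  Nat.sInf_le ⟨F, h, rfl⟩

lemma exists_isZFSet_ncard_eq_Znum [Finite V] (rule : Set V → V → V → Prop) :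
    ∃ F : Set V, IsZFSet rule F ∧ F.ncard = Znum rule :=
  Nat.sInf_mem (s := {n | ∃ F : Set V, IsZFSet rule F ∧ F.ncard = n})
    ⟨_, Set.univ, ⟨[], trivial, by simp [filledAfter]⟩, rfl⟩

end ForcingSequences

section SimplicialVertex

variable {G : SimpleGraph V} {z : V}

lemma isClique_neighborSet_of_isClique [Finite V] {T : Finset V} (hT : G.IsClique (T : Set V))
    (hz : z ∈ T) (hdeg : (G.neighborSet z).ncard = T.card - 1) :
    G.IsClique (G.neighborSet z) := by
  have hsub : (T : Set V) \ {z} ⊆ G.neighborSet z := fun a ⟨ha, haz⟩ =>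
    hT hz ha (Ne.symm haz)
  have hcard : (G.neighborSet z).ncard ≤ ((T : Set V) \ {z}).ncard := by
    rw [hdeg, Set.ncard_sdiff_singleton_of_mem hz, Set.ncard_coe_finset]
  rw [← Set.eq_of_subset_of_ncard_le hsub hcard (Set.toFinite _)]
  exact hT.subset Set.sdiff_subset

lemma not_stdForce_of_stdForce_of_isClique (hN : G.IsClique (G.neighborSet z))
    {S S' : Set V} {w x : V} (hwz : StdForce G S w z) (hSS' : insert z S ⊆ S') :
    ¬ StdForce G S' z x := by
  rintro ⟨-, hxS', hzx, -⟩
  have hxw : x ≠ w := fun h => hxS' (hSS' (Or.inr (h ▸ hwz.1)))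
  have hwx : G.Adj w x := hN hwz.2.2.1.symm hzx hxw.symm
  have hxz : x = z := hwz.2.2.2 x hwx fun h => hxS' (hSS' (Or.inr h))
  exact hxS' (hSS' (Or.inl hxz))

lemma ValidSeq.notMem_targetsOf_of_mem_sourcesOf (hN : G.IsClique (G.neighborSet z)) :
    ∀ {seq : List (V × V)} {S : Set V}, ValidSeq (StdForce G) seq S →
      z ∈ sourcesOf seq → z ∉ targetsOf seq
  | [], _, _, hs => by simp at hs
  | (v, u) :: rest, S, ⟨hf, _, hrest⟩, hs => by
    simp only [sourcesOf_cons, targetsOf_cons] at hs ⊢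
    by_cases hv : v = z
    · subst hv
      rintro (rfl | ⟨p, hp, rfl⟩)
      · exact hf.2.2.1.ne rfl
      · exact hrest.snd_notMem hp (Or.inr hf.1)
    by_cases hu : u = z
    · subst hu
      obtain ⟨p, hp, rfl⟩ := (Set.mem_insert_iff.1 hs).resolve_left (Ne.symm hv)
      obtain ⟨S', hS', hr⟩ := hrest.exists_superset_of_mem p hp
      exact absurd hr (not_stdForce_of_stdForce_of_isClique hN hf hS')
    · rintro (h | ht)
      · exact hu h.symm
      · exact hrest.notMem_targetsOf_of_mem_sourcesOf hN
          ((Set.mem_insert_iff.1 hs).resolve_left (Ne.symm hv)) ht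

lemma critical_or_uncritical_of_forall_validSeq
    (h : ∀ {F : Set V} {seq : List (V × V)}, ValidSeq (StdForce G) seq F →
      z ∈ sourcesOf seq → z ∉ targetsOf seq) :
    Critical G z ∨ Uncritical G z :=
  or_iff_not_imp_left.2 fun hcrit F seq hF hval hfill =>
    ⟨h hval, fun ht => by_contra fun hs => hcrit ⟨F, seq, hF, hval, hfill, hs, ht⟩⟩

end SimplicialVertex

section VertexDeletion

variable {G : SimpleGraph V}

lemma ValidSeq.map_val_induce {s : Set V} :
    ∀ {seq : List (s × s)} {S : Set s}, ValidSeq (StdForce (G.induce s)) seq S →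
      ValidSeq (StdForce G) (seq.map (Prod.map Subtype.val Subtype.val)) (sᶜ ∪ Subtype.val '' S)
  | [], _, _ => trivial
  | (v, u) :: rest, S, ⟨hf, hd, hrest⟩ => by
    refine ⟨⟨Or.inr ⟨v, hf.1, rfl⟩, ?_, by simpa using hf.2.2.1, ?_⟩, ?_, ?_⟩
    · rintro (hu | ⟨u', hu', hu'u⟩)
      · exact hu u.2
      · exact hf.2.1 (Subtype.val_injective hu'u ▸ hu')
    · intro w hvw hw
      have hws : w ∈ s := by_contra fun h => hw (Or.inl h)
      exact congrArg Subtype.val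
        (hf.2.2.2 ⟨w, hws⟩ (by simpa using hvw) fun h => hw (Or.inr ⟨_, h, rfl⟩))
    · simp only [List.mem_map, Prod.exists, Prod.map, forall_exists_index, and_imp]
      rintro _ a b hab rfl
      exact fun h => hd (a, b) hab (Subtype.val_injective h)
    · have := hrest.map_val_induce
      rwa [Set.image_insert_eq, Set.union_insert] at this

lemma Z_le_Z_induce_add_ncard_compl [Finite V] (s : Set V) :
    Z G ≤ Z (G.induce s) + sᶜ.ncard := by
  obtain ⟨F, ⟨seq, hval, hfill⟩, hF⟩ := exists_isZFSet_ncard_eq_Znum (StdForce (G.induce s))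
  have hZF : IsZFSet (StdForce G) (sᶜ ∪ Subtype.val '' F) := by
    refine ⟨_, hval.map_val_induce, ?_⟩
    rw [filledAfter] at hfill ⊢
    rw [targetsOf_map, Set.union_assoc, ← Set.image_union, hfill, Set.image_univ,
      Subtype.range_coe, Set.compl_union_self]
  calc Z G ≤ (sᶜ ∪ Subtype.val '' F).ncard := Znum_le_ncard hZF
    _ ≤ sᶜ.ncard + (Subtype.val '' F).ncard := Set.ncard_union_le _ _
    _ = Z (G.induce s) + sᶜ.ncard := by
      rw [Set.ncard_image_of_injective _ Subtype.val_injective, hF, add_comm]; rfl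

variable {z : V}

lemma ncard_preimage_val_compl_singleton (X : Set V) :
    (Subtype.val ⁻¹' X : Set ({z}ᶜ : Set V)).ncard = (X \ {z}).ncard := by
  rw [← Set.ncard_image_of_injective _ Subtype.val_injective, Subtype.image_preimage_coe,
    Set.inter_comm, Set.sdiff_eq]

lemma preimage_val_union_cons_of_eq_or_eq {S : Set V} {v u : V} {rest : List (V × V)}
    (hvu : v = z ∨ u = z) :
    (Subtype.val ⁻¹' (S ∪ {x | (z, x) ∈ (v, u) :: rest}) : Set ({z}ᶜ : Set V)) =
      Subtype.val ⁻¹' (insert u S ∪ {x | (z, x) ∈ rest}) := by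
  ext ⟨x, hx⟩
  simp only [Set.mem_compl_iff, Set.mem_singleton_iff] at hx
  simp only [Set.mem_preimage, Set.mem_union, Set.mem_insert_iff, Set.mem_ofPred_eq,
    List.mem_cons, Prod.mk.injEq]
  rcases hvu with rfl | rfl <;> tauto

lemma ValidSeq.exists_induce_compl :
    ∀ {seq : List (V × V)} {S : Set V}, ValidSeq (StdForce G) seq S →
      ∃ seq' : List (({z}ᶜ : Set V) × ({z}ᶜ : Set V)),
        ValidSeq (StdForce (G.induce {z}ᶜ)) seq' (Subtype.val ⁻¹' (S ∪ {u | (z, u) ∈ seq})) ∧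
        sourcesOf seq' ⊆ Subtype.val ⁻¹' sourcesOf seq ∧
        Subtype.val ⁻¹' filledAfter S seq ⊆
          filledAfter (Subtype.val ⁻¹' (S ∪ {u | (z, u) ∈ seq})) seq'
  | [], S, _ => ⟨[], trivial, by simp, by simp [filledAfter]⟩
  | (v, u) :: rest, S, ⟨hf, hd, hrest⟩ => by
    obtain ⟨seq', hval, hsrc, hfill⟩ := hrest.exists_induce_compl
    rw [filledAfter_cons]
    by_cases hvu : v = z ∨ u = z
    · have hstart := preimage_val_union_cons_of_eq_or_eq (S := S) (rest := rest) hvu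
      refine ⟨seq', hstart ▸ hval, fun x hx => ?_, hstart ▸ hfill⟩
      obtain ⟨p, hp, hpx⟩ := hsrc hx
      exact ⟨p, List.mem_cons_of_mem _ hp, hpx⟩
    obtain ⟨hv, hu⟩ := not_or.1 hvu
    have hstart : (Subtype.val ⁻¹' (S ∪ {x | (z, x) ∈ (v, u) :: rest}) : Set ({z}ᶜ : Set V)) =
        Subtype.val ⁻¹' (S ∪ {x | (z, x) ∈ rest}) := by
      ext x
      simp [Ne.symm hv]
    have hins : insert ⟨u, hu⟩ (Subtype.val ⁻¹' (S ∪ {x | (z, x) ∈ rest})) =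
        (Subtype.val ⁻¹' (insert u S ∪ {x | (z, x) ∈ rest}) : Set ({z}ᶜ : Set V)) := by
      ext ⟨x, hx⟩
      simp only [Set.mem_insert_iff, Subtype.ext_iff, Set.mem_preimage, Set.mem_union]
      tauto
    refine ⟨(⟨v, hv⟩, ⟨u, hu⟩) :: seq', ?_, ?_, ?_⟩
    · rw [hstart]
      refine ⟨⟨Or.inl hf.1, ?_, by simpa using hf.2.2.1, ?_⟩, ?_, hins ▸ hval⟩
      · rintro (h | h)
        · exact hf.2.1 h
        · exact hrest.snd_notMem h (Set.mem_insert _ _)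
      · intro w hvw hw
        exact Subtype.ext (hf.2.2.2 w (by simpa using hvw) fun h => hw (Or.inl h))
      · intro p hp h
        obtain ⟨q, hq, hq1⟩ := hsrc ⟨p, hp, rfl⟩
        exact hd q hq (hq1.trans (congrArg Subtype.val h))
    · intro x hx
      rw [sourcesOf_cons] at hx ⊢
      rcases hx with rfl | hx
      · exact Or.inl rfl
      · exact Or.inr (hsrc hx)
    · rwa [hstart, filledAfter_cons, hins]

lemma Z_induce_compl_le_ncard [Finite V] {F : Set V} {seq : List (V × V)}
    (hval : ValidSeq (StdForce G) seq F) (hfill : filledAfter F seq = Set.univ)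
    (hz : z ∈ sourcesOf seq → z ∉ targetsOf seq) :
    Z (G.induce {z}ᶜ) ≤ F.ncard := by
  obtain ⟨seq', hval', -, hfill'⟩ := hval.exists_induce_compl (z := z)
  rw [hfill, Set.preimage_univ] at hfill'
  refine (Znum_le_ncard ⟨seq', hval', Set.univ_subset_iff.1 hfill'⟩).trans ?_
  by_cases hs : z ∈ sourcesOf seq
  · obtain ⟨⟨v, u⟩, hp, hvz : v = z⟩ := hs
    subst v
    have hzF : z ∈ F := by
      have hz_filled : z ∈ filledAfter F seq := hfill ▸ Set.mem_univ z
      exact hz_filled.resolve_right (hz ⟨_, hp, rfl⟩)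
    have hsub : F ∪ {x | (z, x) ∈ seq} ⊆ insert u F := by
      rintro x (hx | hx)
      · exact Or.inr hx
      · exact Or.inl (Prod.ext_iff.1 (List.inj_on_of_nodup_map hval.nodup_map_fst hx hp rfl)).2
    calc _ ≤ (Subtype.val ⁻¹' insert u F : Set ({z}ᶜ : Set V)).ncard :=
          Set.ncard_le_ncard (Set.preimage_mono hsub)
      _ = (insert u F).ncard - 1 := by
          rw [ncard_preimage_val_compl_singleton,
            Set.ncard_sdiff_singleton_of_mem (Set.mem_insert_of_mem u hzF)]
      _ ≤ F.ncard := Nat.sub_le_of_le_add (Set.ncard_insert_le u F)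
  · have hsub : F ∪ {x | (z, x) ∈ seq} ⊆ F := by
      rintro x (hx | hx)
      · exact hx
      · exact absurd ⟨_, hx, rfl⟩ hs
    calc _ ≤ (Subtype.val ⁻¹' F : Set ({z}ᶜ : Set V)).ncard :=
          Set.ncard_le_ncard (Set.preimage_mono hsub)
      _ = (F \ {z}).ncard := ncard_preimage_val_compl_singleton F
      _ ≤ F.ncard := Set.ncard_sdiff_singleton_le F z

end VertexDeletion

theorem critical_or_uncritical_of_simplicial_general
    {V : Type*} [Fintype V] (G : SimpleGraph V) (T : Finset V)
    (hT : G.IsClique (↑T : Set V)) (z : V) (hz : z ∈ T)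
    (hdeg : (G.neighborSet z).ncard = T.card - 1) :
    (Critical G z ∨ Uncritical G z) ∧
      (Z (G.induce ({z}ᶜ : Set V)) = Z G ∨ Z (G.induce ({z}ᶜ : Set V)) = Z G - 1) := by
  have hN := isClique_neighborSet_of_isClique hT hz hdeg
  have hsimplicial : ∀ {F : Set V} {seq : List (V × V)}, ValidSeq (StdForce G) seq F →
      z ∈ sourcesOf seq → z ∉ targetsOf seq :=
    fun hval => hval.notMem_targetsOf_of_mem_sourcesOf hN
  obtain ⟨F, ⟨seq, hval, hfill⟩, hF⟩ := exists_isZFSet_ncard_eq_Znum (StdForce G)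
  have hupper : Z (G.induce {z}ᶜ) ≤ Z G :=
    (Z_induce_compl_le_ncard hval hfill (hsimplicial hval)).trans hF.le
  have hlower : Z G ≤ Z (G.induce {z}ᶜ) + 1 := by
    simpa using Z_le_Z_induce_add_ncard_compl (G := G) ({z}ᶜ : Set V)
  exact ⟨critical_or_uncritical_of_forall_validSeq hsimplicial, by omega⟩

/-- If `T` is a clique in `G` and `z ∈ T` has degree `|T| − 1`, then
`z` is critical or uncritical, and consequently `Z(G∖z) ∈ {Z(G), Z(G) − 1}`. -/
theorem critical_or_uncritical_of_simplicial
    {V : Type*} [Fintype V] [DecidableEq V] (G : SimpleGraph V) (T : Finset V)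
    (hT : G.IsClique (↑T : Set V)) (z : V) (hz : z ∈ T)
    (hdeg : (G.neighborSet z).ncard = T.card - 1) :
    (Critical G z ∨ Uncritical G z) ∧
      (Z (G.induce ({z}ᶜ : Set V)) = Z G ∨ Z (G.induce ({z}ᶜ : Set V)) = Z G - 1) :=
  critical_or_uncritical_of_simplicial_general G T hT z hz hdeg
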